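/- arXiv:2108.06150 — 6 statements merged into one kernel-verified Lean document; each statement's English description precedes it below -/
import Mathlib

section
/- For every 2×2 complex unitary matrix U there exist real numbers α, β, γ, δ such that U = e^{iα} · R_z(β) · S · H · R_z(γ) · H · S† · R_z(δ). -/
open Matrix Complex

/-- The single-qubit Z-rotation gate `R_z(θ) = [[e^{-iθ/2}, 0], [0, e^{iθ/2}]]`. -/
noncomputable def Rz (θ : ℝ) : Matrix (Fin 2) (Fin 2) ℂ :=
  !![Complex.exp (-(θ / 2 : ℝ) * Complex.I), 0; 0, Complex.exp ((θ / 2 : ℝ) * Complex.I)]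

/-- The Hadamard gate `H = (1/√2)·[[1,1],[1,−1]]`. -/
noncomputable def Hgate : Matrix (Fin 2) (Fin 2) ℂ :=
  ((1 / Real.sqrt 2 : ℝ) : ℂ) • !![1, 1; 1, -1]

/-- The phase gate `S = [[1,0],[0,i]]`. -/
def Sgate : Matrix (Fin 2) (Fin 2) ℂ := !![1, 0; 0, Complex.I]

/-!
Dividing `U` by a square root `e^{iα}` of its determinant gives a matrix of `SU(2)`, and those
are exactly the matrices `[[a, -c̄], [c, ā]]` with `|a|² + |c|² = 1`. Writing
`a = e^{is} cos θ` and `c = e^{it} sin θ` matches this with the Euler-angle product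
`R_z(β) R_y(γ) R_z(δ)`, and `S H` conjugates `R_z(γ)` into `R_y(γ)`.
-/

theorem Complex.exp_ofReal_mul_I_mem_unitary (θ : ℝ) : exp (θ * I) ∈ unitary ℂ := by
  rw [Unitary.mem_iff_star_mul_self, RCLike.star_def, Complex.conj_mul',
    Complex.norm_exp_ofReal_mul_I]
  simp

theorem Complex.exists_exp_mul_cos_eq_and_exp_mul_sin_eq {a c : ℂ} (h : ‖a‖ ^ 2 + ‖c‖ ^ 2 = 1) :
    ∃ s t θ : ℝ, exp (s * I) * Real.cos θ = a ∧ exp (t * I) * Real.sin θ = c := by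
  have ha : ‖a‖ ≤ 1 := by nlinarith [norm_nonneg c, norm_nonneg a]
  have hcos : Real.cos (Real.arccos ‖a‖) = ‖a‖ :=
    Real.cos_arccos (by linarith [norm_nonneg a]) ha
  have hsin : Real.sin (Real.arccos ‖a‖) = ‖c‖ := by
    rw [Real.sin_arccos, show 1 - ‖a‖ ^ 2 = ‖c‖ ^ 2 by linarith, Real.sqrt_sq (norm_nonneg c)]
  refine ⟨a.arg, c.arg, Real.arccos ‖a‖, ?_, ?_⟩
  · rw [hcos, mul_comm, norm_mul_exp_arg_mul_I]
  · rw [hsin, mul_comm, norm_mul_exp_arg_mul_I]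

section UnitaryGroup

variable {n : Type*} [Fintype n] [DecidableEq n] {U : Matrix n n ℂ}

theorem Matrix.exists_det_eq_exp_mul_I_of_mem_unitaryGroup (hU : U ∈ unitaryGroup n ℂ) :
    ∃ φ : ℝ, U.det = exp (φ * I) := by
  obtain ⟨φ, hφ⟩ := (Complex.norm_eq_one_iff _).mp
    (CStarRing.norm_of_mem_unitary (det_of_mem_unitary hU))
  exact ⟨φ, hφ.symm⟩

theorem Matrix.exp_smul_mem_specialUnitaryGroup [Nonempty n] {φ : ℝ}
    (hU : U ∈ unitaryGroup n ℂ) (hφ : U.det = exp (φ * I)) :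
    exp ((-(φ / Fintype.card n) : ℝ) * I) • U ∈ specialUnitaryGroup n ℂ := by
  refine ⟨Unitary.smul_mem_of_mem (Complex.exp_ofReal_mul_I_mem_unitary _) hU, ?_⟩
  show (exp ((-(φ / Fintype.card n) : ℝ) * I) • U).det = 1
  have hn : (Fintype.card n : ℂ) ≠ 0 := Nat.cast_ne_zero.mpr Fintype.card_ne_zero
  rw [det_smul, hφ, ← exp_nat_mul, ← exp_add, ← exp_zero]
  congr 1
  push_cast
  field_simp
  ring

end UnitaryGroup

theorem Matrix.eq_of_mem_specialUnitaryGroup_fin_two {α : Type*} [CommRing α] [StarRing α]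
    {U : Matrix (Fin 2) (Fin 2) α} (hU : U ∈ specialUnitaryGroup (Fin 2) α) :
    U = !![U 0 0, -star (U 1 0); U 1 0, star (U 0 0)] := by
  obtain ⟨⟨hstar, -⟩, hdet⟩ := hU
  have hadj : star U = U.adjugate := by
    rw [← inv_eq_left_inv hstar, inv_def, show U.det = 1 from hdet, Ring.inverse_one, one_smul]
  have h01 : U 0 1 = -star (U 1 0) := by
    simpa [adjugate_fin_two] using congrArg star (congrFun₂ hadj 1 0)
  have h11 : U 1 1 = star (U 0 0) := by
    simpa [adjugate_fin_two] using congrArg star (congrFun₂ hadj 1 1)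
  ext i j
  fin_cases i <;> fin_cases j <;> simp [h01, h11]

theorem Matrix.norm_sq_add_norm_sq_of_mem_specialUnitaryGroup_fin_two
    {U : Matrix (Fin 2) (Fin 2) ℂ} (hU : U ∈ specialUnitaryGroup (Fin 2) ℂ) :
    ‖U 0 0‖ ^ 2 + ‖U 1 0‖ ^ 2 = 1 := by
  have h := congrFun₂ hU.1.1 0 0
  simp only [mul_apply, Fin.sum_univ_two, star_apply, one_apply_eq, RCLike.star_def,
    Complex.conj_mul'] at h
  exact_mod_cast h

noncomputable def Ry (θ : ℝ) : Matrix (Fin 2) (Fin 2) ℂ :=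
  !![(Real.cos (θ / 2) : ℂ), -(Real.sin (θ / 2) : ℂ);
    (Real.sin (θ / 2) : ℂ), (Real.cos (θ / 2) : ℂ)]

theorem Sgate_mul_Hgate_mul_Rz_mul_Hgate_mul_conjTranspose_Sgate (γ : ℝ) :
    Sgate * Hgate * Rz γ * Hgate * Sgateᴴ = Ry γ := by
  have hsqrt : ((Real.sqrt 2 : ℝ) : ℂ) ^ 2 = 2 := by
    norm_cast; exact Real.sq_sqrt (by norm_num)
  ext i j
  fin_cases i <;> fin_cases j <;>
    simp [Sgate, Hgate, Rz, Ry, Matrix.mul_apply, Fin.sum_univ_two, Complex.ofReal_cos,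
      Complex.ofReal_sin, Complex.cos, Complex.sin] <;>
    field_simp <;> ring_nf <;> simp [hsqrt, Complex.I_sq]

theorem Rz_mul_Ry_mul_Rz (β γ δ : ℝ) :
    Rz β * Ry γ * Rz δ =
      !![exp ((-(β + δ) / 2 : ℝ) * I) * Real.cos (γ / 2),
          -star (exp (((β - δ) / 2 : ℝ) * I) * Real.sin (γ / 2));
        exp (((β - δ) / 2 : ℝ) * I) * Real.sin (γ / 2),
          star (exp ((-(β + δ) / 2 : ℝ) * I) * Real.cos (γ / 2))] := by
  ext i j
  fin_cases i <;> fin_cases j <;>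
    simp [Rz, Ry, Matrix.mul_apply, Fin.sum_univ_two, ← exp_conj, Complex.conj_ofReal,
      ← Complex.sin_conj, ← Complex.cos_conj, map_ofNat] <;>
    rw [mul_right_comm, ← exp_add] <;> ring_nf

theorem exists_Rz_mul_Ry_mul_Rz_eq {a c : ℂ} (h : ‖a‖ ^ 2 + ‖c‖ ^ 2 = 1) :
    ∃ β γ δ : ℝ, Rz β * Ry γ * Rz δ = !![a, -star c; c, star a] := by
  obtain ⟨s, t, θ, ha, hc⟩ := Complex.exists_exp_mul_cos_eq_and_exp_mul_sin_eq h
  refine ⟨t - s, 2 * θ, -s - t, ?_⟩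
  rw [Rz_mul_Ry_mul_Rz, show -(t - s + (-s - t)) / 2 = s by ring,
    show (t - s - (-s - t)) / 2 = t by ring, mul_div_cancel_left₀ θ two_ne_zero, ha, hc]

theorem exists_eq_Rz_mul_Ry_mul_Rz_of_mem_specialUnitaryGroup {U : Matrix (Fin 2) (Fin 2) ℂ}
    (hU : U ∈ specialUnitaryGroup (Fin 2) ℂ) : ∃ β γ δ : ℝ, U = Rz β * Ry γ * Rz δ := by
  obtain ⟨β, γ, δ, h⟩ :=
    exists_Rz_mul_Ry_mul_Rz_eq (norm_sq_add_norm_sq_of_mem_specialUnitaryGroup_fin_two hU)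
  exact ⟨β, γ, δ, (eq_of_mem_specialUnitaryGroup_fin_two hU).trans h.symm⟩

/-- Every 2×2 complex unitary matrix `U` can be written as
`U = e^{iα} · R_z(β) · S · H · R_z(γ) · H · S† · R_z(δ)` for some real `α, β, γ, δ`. -/
theorem unitary_eq_phase_mul_Rz_S_H_Rz_H_Sdag_Rz
    (U : Matrix (Fin 2) (Fin 2) ℂ) (hU : U * Uᴴ = 1) :
    ∃ α β γ δ : ℝ,
      U = Complex.exp ((α : ℂ) * Complex.I) •
        (Rz β * Sgate * Hgate * Rz γ * Hgate * Sgateᴴ * Rz δ) := by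
  have hUu : U ∈ unitaryGroup (Fin 2) ℂ := mem_unitaryGroup_iff.mpr hU
  obtain ⟨φ, hφ⟩ := exists_det_eq_exp_mul_I_of_mem_unitaryGroup hUu
  obtain ⟨β, γ, δ, hV⟩ := exists_eq_Rz_mul_Ry_mul_Rz_of_mem_specialUnitaryGroup
    (exp_smul_mem_specialUnitaryGroup hUu hφ)
  refine ⟨φ / 2, β, γ, δ, ?_⟩
  have hRy : Rz β * Sgate * Hgate * Rz γ * Hgate * Sgateᴴ * Rz δ = Rz β * Ry γ * Rz δ := by
    simp only [← Sgate_mul_Hgate_mul_Rz_mul_Hgate_mul_conjTranspose_Sgate, Matrix.mul_assoc]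
  rw [hRy, ← hV, smul_smul, ← exp_add]
  simp
end

section
/- Let n ≥ 1 and let θ : F_2^n \ {0} → ℝ be any function. Then there exists a unique family of real numbers (α_s)_{s ∈ F_2^n \ {0}} such that for every x ∈ F_2^n \ {0}, the sum over all nonzero s of α_s·⟨s,x⟩ equals θ(x). -/
/-- The inner product over `F_2` of two vectors in `F_2^n`, interpreted as the real
number `0` or `1`. -/
def ipR (n : ℕ) (s x : Fin n → ZMod 2) : ℝ := ((∑ i, s i * x i : ZMod 2).val : ℝ)

/-!
Write `⟨s,x⟩ = (1 - (-1)^⟨s,x⟩) / 2`. Orthogonality of the characters `x ↦ (-1)^⟨u,x⟩` then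
shows that the matrix `M = (⟨s,x⟩)_{s,x ≠ 0}` satisfies `M Mᵀ = 2^n/4 · (I + J)`, with `J` the
all-ones matrix. Since `det (I + J) = 2^n ≠ 0`, `M` is invertible, so `α ↦ αM` is a bijection.
-/

open Matrix

noncomputable def signChar : AddChar (ZMod 2) ℝ := AddChar.zmodChar 2 (ζ := -1) (by norm_num)

lemma val_eq_one_sub_signChar_div_two (a : ZMod 2) : (a.val : ℝ) = (1 - signChar a) / 2 := by
  rw [signChar, AddChar.zmodChar_apply]
  fin_cases a <;> norm_num [ZMod.val]

lemma signChar_ne_one {a : ZMod 2} (ha : a ≠ 0) : signChar a ≠ 1 := by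
  rw [signChar, AddChar.zmodChar_apply]
  fin_cases a
  · exact absurd rfl ha
  · norm_num [ZMod.val]

lemma add_eq_zero_iff_eq_of_zmod_two {ι : Type*} (s t : ι → ZMod 2) : s + t = 0 ↔ s = t := by
  rw [add_eq_zero_iff_eq_neg, show -t = t from funext fun i => ZMod.neg_eq_self_mod_two (t i)]

lemma det_one_add_of_one {κ R : Type*} [Fintype κ] [DecidableEq κ] [CommRing R] :
    det (1 + of fun _ _ : κ => (1 : R)) = 1 + (Fintype.card κ : R) := by
  convert det_one_add_replicateCol_mul_replicateRow (ι := Unit) (fun _ : κ => (1 : R)) 1 using 3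
  · ext; simp [mul_apply]
  · simp [dotProduct]

section Pairing

variable {ι : Type*} [Fintype ι] [DecidableEq ι]

lemma sum_signChar_dotProduct (u : ι → ZMod 2) :
    ∑ x, signChar (u ⬝ᵥ x) = if u = 0 then (2 : ℝ) ^ Fintype.card ι else 0 := by
  split_ifs with hu
  · simp [hu]
  · obtain ⟨i, hi⟩ := Function.ne_iff.1 hu
    let ψ := signChar.compAddMonoidHom (AddMonoidHom.mk' (u ⬝ᵥ ·) (dotProduct_add u))
    have hψ : ψ ≠ 0 :=
      AddChar.ne_zero_iff.2 ⟨Pi.single i 1, by simpa [ψ] using signChar_ne_one hi⟩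
    exact AddChar.sum_eq_zero_iff_ne_zero.2 hψ

lemma sum_val_dotProduct_mul_val_dotProduct {s t : ι → ZMod 2} (hs : s ≠ 0) (ht : t ≠ 0) :
    ∑ x, ((s ⬝ᵥ x).val : ℝ) * (t ⬝ᵥ x).val
      = (2 : ℝ) ^ Fintype.card ι / 4 * (1 + if s = t then 1 else 0) := by
  have expand : ∀ x, ((s ⬝ᵥ x).val : ℝ) * (t ⬝ᵥ x).val
      = (1 - signChar (s ⬝ᵥ x) - signChar (t ⬝ᵥ x) + signChar ((s + t) ⬝ᵥ x)) / 4 := by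
    intro x
    rw [val_eq_one_sub_signChar_div_two, val_eq_one_sub_signChar_div_two, add_dotProduct,
      AddChar.map_add_eq_mul]
    ring
  simp_rw [expand, ← Finset.sum_div, Finset.sum_add_distrib, Finset.sum_sub_distrib,
    sum_signChar_dotProduct, add_eq_zero_iff_eq_of_zmod_two, if_neg hs, if_neg ht]
  split_ifs
  · simp; ring
  · simp

variable (ι) in
noncomputable def pairingMatrix : Matrix {v : ι → ZMod 2 // v ≠ 0} {v : ι → ZMod 2 // v ≠ 0} ℝ :=
  of fun s x => ((s.val ⬝ᵥ x.val).val : ℝ)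

lemma pairingMatrix_mul_transpose :
    pairingMatrix ι * (pairingMatrix ι)ᵀ
      = ((2 : ℝ) ^ Fintype.card ι / 4) • (1 + of fun _ _ => 1) := by
  ext s t
  calc (pairingMatrix ι * (pairingMatrix ι)ᵀ) s t
      = ∑ x : {v : ι → ZMod 2 // v ≠ 0}, ((s.val ⬝ᵥ x.val).val : ℝ) * (t.val ⬝ᵥ x.val).val := rfl
    _ = ∑ x, ((s.val ⬝ᵥ x).val : ℝ) * (t.val ⬝ᵥ x).val := by
      rw [← Finset.sum_subtype (Finset.univ.erase 0) (by simp)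
          (fun x => ((s.val ⬝ᵥ x).val : ℝ) * (t.val ⬝ᵥ x).val), Finset.sum_erase _ (by simp)]
    _ = _ := by
      rw [sum_val_dotProduct_mul_val_dotProduct s.prop t.prop]
      simp [one_apply, Subtype.ext_iff, add_comm]

lemma isUnit_pairingMatrix : IsUnit (pairingMatrix ι) := by
  refine isUnit_of_mul_isUnit_left (y := (pairingMatrix ι)ᵀ) ?_
  rw [pairingMatrix_mul_transpose, isUnit_iff_isUnit_det, det_smul, det_one_add_of_one,
    isUnit_iff_ne_zero]
  positivity

end Pairing

theorem existsUnique_alpha_general (n : ℕ)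
    (θ : {v : Fin n → ZMod 2 // v ≠ 0} → ℝ) :
    ∃! α : {v : Fin n → ZMod 2 // v ≠ 0} → ℝ,
      ∀ x : {v : Fin n → ZMod 2 // v ≠ 0},
        ∑ s : {v : Fin n → ZMod 2 // v ≠ 0}, α s * ipR n s.val x.val = θ x := by
  have hM : Function.Bijective (pairingMatrix (Fin n)).vecMul :=
    ⟨vecMul_injective_iff_isUnit.2 isUnit_pairingMatrix,
      vecMul_surjective_iff_isUnit.2 isUnit_pairingMatrix⟩
  obtain ⟨α, hα, hunique⟩ := hM.existsUnique θ
  -- `ipR n s x` is definitionally `(s ⬝ᵥ x).val`, so `(α ᵥ* M) x` is the sum in the statement.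
  exact ⟨α, fun x => congrFun hα x, fun β hβ => hunique β (funext hβ)⟩

/-- For any target phases `θ` on the nonzero elements of `F_2^n`, there is a unique family
of reals `(α_s)_{s ≠ 0}` with `∑_{s ≠ 0} α_s·⟨s,x⟩ = θ(x)` for every nonzero `x`. -/
theorem existsUnique_alpha (n : ℕ) (hn : 1 ≤ n)
    (θ : {v : Fin n → ZMod 2 // v ≠ 0} → ℝ) :
    ∃! α : {v : Fin n → ZMod 2 // v ≠ 0} → ℝ,
      ∀ x : {v : Fin n → ZMod 2 // v ≠ 0},
        ∑ s : {v : Fin n → ZMod 2 // v ≠ 0}, α s * ipR n s.val x.val = θ x :=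
  existsUnique_alpha_general n θ
end

section
/- Let n ≥ 1 and let θ : F_2^n → ℝ satisfy θ(0) = 0. Then there exists a family of real numbers (α_s)_{s ∈ F_2^n \ {0}} such that the 2^n × 2^n diagonal complex matrix Λ with entries Λ(x,x) = e^{iθ(x)} equals the product over all nonzero s ∈ F_2^n of the diagonal matrices D_s with entries D_s(x,x) = e^{i·α_s·⟨s,x⟩} (the D_s are diagonal and hence pairwise commute, so the product is independent of the order of the factors). -/
open Matrix

/-! Writing `⟨s, x⟩ = (1 - (-1) ^ ⟨s, x⟩) / 2` turns the claim about phases into an expansion of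
`θ` in the Walsh characters `(-1) ^ ⟨s, ·⟩`. Fourier inversion on `F_2^n` gives
`θ = ∑ₛ θ̂(s) (-1) ^ ⟨s, ·⟩`, and `θ 0 = 0` says `∑ₛ θ̂(s) = 0`, so `θ = ∑_{s ≠ 0} -2 θ̂(s) ⟨s, ·⟩`.
Since products of diagonal matrices multiply entrywise, `α s = -2 θ̂(s)` works. -/

open Finset

namespace ZMod

lemma val_eq_one_sub_neg_one_pow_val_div_two (a : ZMod 2) :
    (a.val : ℝ) = (1 - (-1) ^ a.val) / 2 := by
  fin_cases a <;> norm_num [ZMod.val]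

end ZMod

section Walsh

variable {ι : Type*} [Fintype ι]

/-- The Walsh character `s ↦ (-1) ^ ⟨x, s⟩`. -/
noncomputable def walshChar (x : ι → ZMod 2) : AddChar (ι → ZMod 2) ℝ :=
  (AddChar.zmodChar 2 (by norm_num : (-1 : ℝ) ^ 2 = 1)).compAddMonoidHom
    (AddMonoidHom.mk' (x ⬝ᵥ ·) (dotProduct_add x))

lemma walshChar_apply (x s : ι → ZMod 2) : walshChar x s = (-1) ^ (x ⬝ᵥ s).val := rfl

lemma walshChar_apply_comm (x s : ι → ZMod 2) : walshChar x s = walshChar s x := by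
  rw [walshChar_apply, walshChar_apply, dotProduct_comm]

lemma walshChar_zero_apply (s : ι → ZMod 2) : walshChar 0 s = 1 := by
  rw [walshChar_apply_comm, AddChar.map_zero_eq_one]

lemma walshChar_add_apply (x y s : ι → ZMod 2) :
    walshChar (x + y) s = walshChar x s * walshChar y s := by
  simp only [walshChar_apply_comm _ s, AddChar.map_add_eq_mul]

variable [DecidableEq ι]

lemma walshChar_eq_zero_iff {x : ι → ZMod 2} : walshChar x = 0 ↔ x = 0 := by
  refine ⟨fun h => funext fun i => ?_, fun h => ?_⟩
  · have hi := DFunLike.congr_fun h (Pi.single i 1)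
    rw [walshChar_apply, dotProduct_single, mul_one, AddChar.zero_apply] at hi
    revert hi
    generalize x i = a
    fin_cases a
    · intro; rfl
    · norm_num [ZMod.val]
  · ext s
    rw [h, walshChar_zero_apply, AddChar.zero_apply]

lemma sum_walshChar (x : ι → ZMod 2) :
    ∑ s, walshChar x s = if x = 0 then 2 ^ Fintype.card ι else 0 := by
  simp only [AddChar.sum_eq_ite, walshChar_eq_zero_iff, Fintype.card_pi, ZMod.card,
    prod_const, card_univ, Nat.cast_pow, Nat.cast_ofNat]

noncomputable def walshCoeff (f : (ι → ZMod 2) → ℝ) (s : ι → ZMod 2) : ℝ :=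
  (2 ^ Fintype.card ι)⁻¹ * ∑ y, f y * walshChar s y

theorem sum_walshCoeff_mul_walshChar (f : (ι → ZMod 2) → ℝ) (x : ι → ZMod 2) :
    ∑ s, walshCoeff f s * walshChar s x = f x := by
  have orth (y : ι → ZMod 2) : ∑ s, walshChar s y * walshChar s x =
      if y = x then 2 ^ Fintype.card ι else 0 := by
    have neg_x : -x = x := funext fun i => ZMod.neg_eq_self_mod_two (x i)
    simp only [walshChar_apply_comm _ y, walshChar_apply_comm _ x, ← walshChar_add_apply,
      sum_walshChar, add_eq_zero_iff_eq_neg, neg_x]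
  calc ∑ s, walshCoeff f s * walshChar s x
      = (2 ^ Fintype.card ι)⁻¹ * ∑ y, f y * ∑ s, walshChar s y * walshChar s x := by
        simp only [walshCoeff, mul_sum, sum_mul]
        rw [sum_comm]
        simp only [mul_assoc]
    _ = f x := by simp [orth]; field_simp

theorem exists_sum_mul_val_dotProduct_eq (θ : (ι → ZMod 2) → ℝ) (hθ : θ 0 = 0) :
    ∃ α : {s : ι → ZMod 2 // s ≠ 0} → ℝ, ∀ x, ∑ s, α s * ((s.1 ⬝ᵥ x).val : ℝ) = θ x := by
  refine ⟨fun s => -2 * walshCoeff θ s, fun x => ?_⟩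
  have sum_walshCoeff : ∑ s, walshCoeff θ s = 0 := by
    simpa [hθ] using sum_walshCoeff_mul_walshChar θ 0
  calc ∑ s : {s : ι → ZMod 2 // s ≠ 0}, -2 * walshCoeff θ s * ((s.1 ⬝ᵥ x).val : ℝ)
      = ∑ s : {s : ι → ZMod 2 // s ≠ 0}, walshCoeff θ s * (walshChar s.1 x - 1) := by
        simp only [ZMod.val_eq_one_sub_neg_one_pow_val_div_two, walshChar_apply]
        ring_nf
    _ = ∑ s, walshCoeff θ s * (walshChar s x - 1) := by
        rw [Fintype.sum_eq_add_sum_subtype_ne _ (0 : ι → ZMod 2), walshChar_zero_apply,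
          sub_self, mul_zero, zero_add]
    _ = θ x := by
        simp only [mul_sub, mul_one, sum_sub_distrib, sum_walshCoeff_mul_walshChar,
          sum_walshCoeff, sub_zero]

end Walsh

theorem Matrix.noncommProd_diagonal {ι m α : Type*} [Fintype m] [DecidableEq m] [CommSemiring α]
    (s : Finset ι) (d : ι → m → α) (comm) :
    s.noncommProd (fun i => diagonal (d i)) comm = diagonal (∏ i ∈ s, d i) := by
  have h := map_noncommProd s d (fun _ _ _ _ _ => Commute.all _ _) (diagonalRingHom m α)
  rw [noncommProd_eq_prod] at h
  exact h.symm

/-- Any `2^n × 2^n` diagonal unitary `Λ` with entries `e^{iθ(x)}` (where `θ(0) = 0`) is the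
product, over all nonzero `s ∈ F_2^n`, of the diagonal matrices `D_s` with entries
`e^{i·α_s·⟨s,x⟩}`, for a suitable choice of reals `(α_s)`.  The `D_s` are diagonal and hence
pairwise commute, so the product (formalized via `Finset.noncommProd`) does not depend on the
order of the factors. -/
theorem diagonal_unitary_eq_prod_phase_factors (n : ℕ)
    (θ : (Fin n → ZMod 2) → ℝ) (hθ : θ 0 = 0) :
    ∃ α : {s : Fin n → ZMod 2 // s ≠ 0} → ℝ,
      (Matrix.diagonal fun x : Fin n → ZMod 2 => Complex.exp ((θ x : ℂ) * Complex.I)) =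
        Finset.univ.noncommProd
          (fun s : {s : Fin n → ZMod 2 // s ≠ 0} =>
            Matrix.diagonal fun x : Fin n → ZMod 2 =>
              Complex.exp (((α s * ipR n s.val x : ℝ) : ℂ) * Complex.I))
          (fun a _ b _ _ => by
            show Matrix.diagonal _ * Matrix.diagonal _ = Matrix.diagonal _ * Matrix.diagonal _
            rw [Matrix.diagonal_mul_diagonal, Matrix.diagonal_mul_diagonal]
            exact congrArg _ (funext fun i => mul_comm _ _)) := by
  obtain ⟨α, hα⟩ := exists_sum_mul_val_dotProduct_eq θ hθ
  refine ⟨α, Eq.trans (congrArg diagonal (funext fun x => ?_))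
    (Matrix.noncommProd_diagonal _ _ _).symm⟩
  rw [Finset.prod_apply, ← Complex.exp_sum, ← Finset.sum_mul, ← Complex.ofReal_sum]
  exact congrArg (fun t : ℝ => Complex.exp (t * Complex.I)) (hα x).symm
end

section
/- Let n and m be positive integers with 2n ≤ m and m·n ≤ 2^n, let t = ⌊log₂(m/2)⌋ (so t < n) and ℓ = 2^t. Then there exists a bijection s from {1,…,ℓ} × {1,…,2^{n−t}} onto F_2^n (so the two-dimensional array {s(j,k)} partitions the set of n-bit strings) such that: (1) for every j ∈ {1,…,ℓ}, the last n−t coordinates of s(j,1) are all 0, and for every j and all k, k' ∈ {1,…,2^{n−t}}, s(j,k) and s(j,k') agree in their first t coordinates; (2) for every j ∈ {1,…,ℓ} and every k ∈ {1,…,2^{n−t}−1}, s(j,k) and s(j,k+1) differ in exactly one coordinate; (3) for every k ∈ {1,…,2^{n−t}−1} and every t' ∈ {t+1,…,n}, the number of indices j ∈ {1,…,ℓ} such that s(j,k) and s(j,k+1) differ in coordinate t' is at most m/(2(n−t)) + 1 (as an inequality of real numbers). -/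
/-!
Row `j` of the array is the `t`-bit expansion of `j` followed by the reflected Gray code
`k ↦ k ^^^ k / 2` on the remaining `d = n - t` coordinates, cyclically rotated by `j`.
The Gray code is xor-linear and `k ^^^ (k + 1) = 2 ^ (w + 1) - 1`, so step `k` flips a single
bit `w`, which row `j` places at coordinate `t + x` with `x + j ≡ w [MOD d]`. Hence the rows
flipping a fixed coordinate at step `k` form one residue class mod `d` among `ℓ = 2 ^ t` rows,
at most `ℓ / d + 1` of them, and `2 ℓ ≤ m` gives the bound.
-/

open Finset

def grayCode (k : ℕ) : ℕ := k ^^^ k / 2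

theorem grayCode_xor (a b : ℕ) : grayCode (a ^^^ b) = grayCode a ^^^ grayCode b := by
  simp only [grayCode, Nat.xor_div_two]
  ac_rfl

theorem grayCode_eq_zero_iff {k : ℕ} : grayCode k = 0 ↔ k = 0 := by
  simp only [grayCode, Nat.xor_eq_zero_iff]
  omega

theorem grayCode_injective : Function.Injective grayCode := fun a b h => by
  rwa [← Nat.xor_eq_zero_iff, ← grayCode_eq_zero_iff, grayCode_xor, Nat.xor_eq_zero_iff]

theorem grayCode_lt_two_pow {k d : ℕ} (h : k < 2 ^ d) : grayCode k < 2 ^ d :=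
  Nat.xor_lt_two_pow h ((Nat.div_le_self _ _).trans_lt h)

theorem grayCode_two_pow_sub_one (w : ℕ) : grayCode (2 ^ (w + 1) - 1) = 2 ^ w := by
  refine Nat.eq_of_testBit_eq fun i => ?_
  simp only [grayCode, Nat.testBit_xor, Nat.testBit_div_two, Nat.testBit_two_pow_sub_one,
    Nat.testBit_two_pow]
  by_cases h : i = w <;> grind

theorem exists_xor_succ_eq_two_pow_sub_one (k : ℕ) : ∃ w, k ^^^ (k + 1) = 2 ^ (w + 1) - 1 := by
  obtain ⟨w, _, ⟨q, rfl⟩, hk⟩ := Nat.exists_eq_two_pow_mul_odd (Nat.add_one_ne_zero k)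
  have hpos : 0 < 2 ^ w := by positivity
  have hlt : 2 ^ w - 1 < 2 ^ (w + 1) := by rw [pow_succ]; omega
  have hk : k = 2 ^ (w + 1) * q + (2 ^ w - 1) := by
    have : k + 1 = 2 ^ (w + 1) * q + 2 ^ w := by rw [hk]; ring
    omega
  refine ⟨w, Nat.eq_of_testBit_eq fun i => ?_⟩
  rw [Nat.testBit_xor, hk,
    show 2 ^ (w + 1) * q + (2 ^ w - 1) + 1 = 2 ^ (w + 1) * q + 2 ^ w by omega,
    Nat.testBit_two_pow_mul_add _ hlt,
    Nat.testBit_two_pow_mul_add _ (Nat.pow_lt_pow_succ one_lt_two)]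
  simp only [Nat.testBit_two_pow_sub_one, Nat.testBit_two_pow]
  split_ifs <;> grind

theorem exists_grayCode_xor_grayCode_succ (k : ℕ) :
    ∃ w, grayCode k ^^^ grayCode (k + 1) = 2 ^ w := by
  obtain ⟨w, hw⟩ := exists_xor_succ_eq_two_pow_sub_one k
  exact ⟨w, by rw [← grayCode_xor, hw, grayCode_two_pow_sub_one]⟩

theorem exists_testBit_grayCode_succ_ne_iff {k d : ℕ} (hk : k + 1 < 2 ^ d) :
    ∃ w < d, ∀ i, (grayCode k).testBit i ≠ (grayCode (k + 1)).testBit i ↔ i = w := by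
  obtain ⟨w, hw⟩ := exists_grayCode_xor_grayCode_succ k
  have hwd : 2 ^ w < 2 ^ d :=
    hw ▸ Nat.xor_lt_two_pow (grayCode_lt_two_pow (by omega)) (grayCode_lt_two_pow hk)
  refine ⟨w, (Nat.pow_lt_pow_iff_right one_lt_two).1 hwd, fun i => ?_⟩
  have := congrArg (Nat.testBit · i) hw
  simp only [Nat.testBit_xor, Nat.testBit_two_pow] at this
  grind

theorem Nat.eq_of_testBit_eq_of_lt_two_pow {x y n : ℕ} (hx : x < 2 ^ n) (hy : y < 2 ^ n)
    (h : ∀ i < n, x.testBit i = y.testBit i) : x = y := by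
  refine Nat.eq_of_testBit_eq fun i => ?_
  by_cases hi : i < n
  · exact h i hi
  · have hn : 2 ^ n ≤ 2 ^ i := Nat.pow_le_pow_right two_pos (by omega)
    rw [Nat.testBit_lt_two_pow (hx.trans_le hn), Nat.testBit_lt_two_pow (hy.trans_le hn)]

theorem exists_lt_add_mod_eq {d w : ℕ} (hw : w < d) (j : ℕ) : ∃ x < d, (x + j) % d = w := by
  refine ⟨(w + (d - j % d)) % d, Nat.mod_lt _ (by omega), ?_⟩
  have hj : w + (d - j % d) + j = w + d * (j / d + 1) := by
    have := Nat.div_add_mod j d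
    have := Nat.mod_lt j (show 0 < d by omega)
    rw [Nat.mul_add_one]
    omega
  rw [Nat.mod_add_mod, hj, Nat.add_mul_mod_self_left, Nat.mod_eq_of_lt hw]

theorem card_filter_add_mod_eq_le (ℓ d a w : ℕ) :
    #{j : Fin ℓ | (a + j) % d = w} ≤ ℓ / d + 1 := by
  rw [← card_range (ℓ / d + 1)]
  refine card_le_card_of_injOn (fun j => j / d) (fun j _ => ?_) fun j hj j' hj' hdiv => ?_
  · simpa [Nat.lt_succ_iff] using Nat.div_le_div_right j.isLt.le
  · simp only [mem_coe, mem_filter, mem_univ, true_and] at hj hj'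
    have hmod : (j : ℕ) % d = j' % d := Nat.ModEq.add_left_cancel' a (hj.trans hj'.symm)
    exact Fin.ext (by rw [← Nat.div_add_mod j d, ← Nat.div_add_mod j' d, hmod]; simp_all)

theorem card_filter_le_and_sub_add_mod_eq {d w : ℕ} (hw : w < d) (t j : ℕ) :
    #{c : Fin (t + d) | t ≤ c ∧ (c - t + j) % d = w} = 1 := by
  obtain ⟨x, hx, hxw⟩ := exists_lt_add_mod_eq hw j
  rw [card_eq_one]
  refine ⟨⟨t + x, by omega⟩, eq_singleton_iff_unique_mem.2 ⟨by simp [hxw], fun c hc => ?_⟩⟩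
  simp only [mem_filter, mem_univ, true_and] at hc
  have : c - t ≡ x [MOD d] := Nat.ModEq.add_right_cancel' j (hc.2.trans hxw.symm)
  rw [Nat.ModEq, Nat.mod_eq_of_lt (by omega), Nat.mod_eq_of_lt hx] at this
  exact Fin.ext (by simp; omega)

def grayArrayBit (t d j k c : ℕ) : Bool :=
  if c < t then j.testBit c else (grayCode k).testBit ((c - t + j) % d)

section grayArrayBit

variable {t d j k c : ℕ}

theorem grayArrayBit_of_lt (hc : c < t) : grayArrayBit t d j k c = j.testBit c :=
  if_pos hc

theorem grayArrayBit_zero_of_le (hc : t ≤ c) : grayArrayBit t d j 0 c = false := by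
  simp [grayArrayBit, grayCode, Nat.not_lt.2 hc]

theorem grayArrayBit_ne_iff {k' w : ℕ}
    (hw : ∀ i, (grayCode k).testBit i ≠ (grayCode k').testBit i ↔ i = w) :
    grayArrayBit t d j k c ≠ grayArrayBit t d j k' c ↔ t ≤ c ∧ (c - t + j) % d = w := by
  by_cases hc : c < t
  · simp [grayArrayBit, hc]
  · simp [grayArrayBit, hc, hw, Nat.not_lt.1 hc]

theorem eq_and_eq_of_grayArrayBit_eq {j' k' : ℕ} (hj : j < 2 ^ t) (hj' : j' < 2 ^ t)
    (hk : k < 2 ^ d) (hk' : k' < 2 ^ d)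
    (h : ∀ c < t + d, grayArrayBit t d j k c = grayArrayBit t d j' k' c) : j = j' ∧ k = k' := by
  obtain rfl : j = j' := Nat.eq_of_testBit_eq_of_lt_two_pow hj hj' fun i hi => by
    simpa [grayArrayBit_of_lt hi] using h i (by omega)
  refine ⟨rfl, grayCode_injective <| Nat.eq_of_testBit_eq_of_lt_two_pow
    (grayCode_lt_two_pow hk) (grayCode_lt_two_pow hk') fun i hi => ?_⟩
  obtain ⟨x, hx, hxi⟩ := exists_lt_add_mod_eq hi j
  simpa [grayArrayBit, hxi] using h (t + x) (by omega)

end grayArrayBit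

theorem Bool.toNat_cast_zmod_two_injective :
    Function.Injective (fun b : Bool => (b.toNat : ZMod 2)) := by
  decide

theorem exists_grayArray (t d : ℕ) :
    ∃ s : Fin (2 ^ t) × Fin (2 ^ d) → (Fin (t + d) → ZMod 2),
      Function.Bijective s ∧
      (∀ (j : Fin (2 ^ t)) (k₀ : Fin (2 ^ d)), (k₀ : ℕ) = 0 →
        ∀ c : Fin (t + d), t ≤ (c : ℕ) → s (j, k₀) c = 0) ∧
      (∀ (j : Fin (2 ^ t)) (k k' : Fin (2 ^ d)) (c : Fin (t + d)),
        (c : ℕ) < t → s (j, k) c = s (j, k') c) ∧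
      (∀ (j : Fin (2 ^ t)) (k k' : Fin (2 ^ d)), (k' : ℕ) = (k : ℕ) + 1 →
        #{c : Fin (t + d) | s (j, k) c ≠ s (j, k') c} = 1) ∧
      (∀ (k k' : Fin (2 ^ d)), (k' : ℕ) = (k : ℕ) + 1 → ∀ c : Fin (t + d),
        #{j : Fin (2 ^ t) | s (j, k) c ≠ s (j, k') c} ≤ 2 ^ t / d + 1) := by
  set s : Fin (2 ^ t) × Fin (2 ^ d) → (Fin (t + d) → ZMod 2) :=
    fun p c => (grayArrayBit t d p.1 p.2 c).toNat
  have hs {p p' c} :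
      s p c = s p' c ↔ grayArrayBit t d p.1 p.2 c = grayArrayBit t d p'.1 p'.2 c :=
    Bool.toNat_cast_zmod_two_injective.eq_iff
  have hs_ne {p p' c} :
      s p c ≠ s p' c ↔ grayArrayBit t d p.1 p.2 c ≠ grayArrayBit t d p'.1 p'.2 c :=
    hs.not
  refine ⟨s, ?_, fun j k₀ hk₀ c hc => ?_, fun j k k' c hc => ?_, fun j k k' hk => ?_,
    fun k k' hk c => ?_⟩
  · refine (Fintype.bijective_iff_injective_and_card s).2 ⟨fun p p' h => ?_, by simp [pow_add]⟩
    obtain ⟨hj, hk⟩ := eq_and_eq_of_grayArrayBit_eq p.1.isLt p'.1.isLt p.2.isLt p'.2.isLt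
      fun c hc => hs.1 (congrFun h ⟨c, hc⟩)
    exact Prod.ext (Fin.ext hj) (Fin.ext hk)
  · simp [s, hk₀, grayArrayBit_zero_of_le hc]
  · exact hs.2 (by simp [grayArrayBit_of_lt hc])
  · obtain ⟨w, hwd, hw⟩ := exists_testBit_grayCode_succ_ne_iff (hk ▸ k'.isLt)
    simp_rw [hs_ne, hk, grayArrayBit_ne_iff hw]
    exact card_filter_le_and_sub_add_mod_eq hwd t j
  · obtain ⟨w, -, hw⟩ := exists_testBit_grayCode_succ_ne_iff (hk ▸ k'.isLt)
    simp_rw [hs_ne, hk, grayArrayBit_ne_iff hw]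
    refine (card_le_card fun j => ?_).trans (card_filter_add_mod_eq_le _ d (c - t) w)
    simp +contextual

theorem exists_gray_code_array_general (n m t ℓ : ℕ)
    (hn : 1 ≤ n) (h2n : 2 * n ≤ m) (hmn : m * n ≤ 2 ^ n)
    (ht : t = Nat.log 2 (m / 2)) (hℓ : ℓ = 2 ^ t) :
    ∃ s : Fin ℓ × Fin (2 ^ (n - t)) → (Fin n → ZMod 2),
      Function.Bijective s ∧
      (∀ (j : Fin ℓ) (k₀ : Fin (2 ^ (n - t))), (k₀ : ℕ) = 0 →
        ∀ c : Fin n, t ≤ (c : ℕ) → s (j, k₀) c = 0) ∧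
      (∀ (j : Fin ℓ) (k k' : Fin (2 ^ (n - t))) (c : Fin n),
        (c : ℕ) < t → s (j, k) c = s (j, k') c) ∧
      (∀ (j : Fin ℓ) (k k' : Fin (2 ^ (n - t))), (k' : ℕ) = (k : ℕ) + 1 →
        (Finset.univ.filter fun c : Fin n => s (j, k) c ≠ s (j, k') c).card = 1) ∧
      (∀ (k k' : Fin (2 ^ (n - t))), (k' : ℕ) = (k : ℕ) + 1 →
        ∀ c : Fin n, t ≤ (c : ℕ) →
          ((Finset.univ.filter fun j : Fin ℓ => s (j, k) c ≠ s (j, k') c).card : ℝ) ≤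
            (m : ℝ) / (2 * ((n : ℝ) - (t : ℝ))) + 1) := by
  have h2ℓ : 2 * ℓ ≤ m := by
    have := Nat.pow_log_le_self 2 (x := m / 2) (by omega)
    rw [← ht, ← hℓ] at this
    omega
  have htn : t ≤ n := by
    have : 2 ^ t < 2 ^ n := calc
      2 ^ t = ℓ := hℓ.symm
      _ < m := by omega
      _ ≤ m * n := Nat.le_mul_of_pos_right m hn
      _ ≤ 2 ^ n := hmn
    exact ((Nat.pow_lt_pow_iff_right one_lt_two).1 this).le
  obtain ⟨d, rfl⟩ := Nat.exists_eq_add_of_le htn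
  subst hℓ
  obtain ⟨s, hbij, hzero, hprefix, hstep, hcol⟩ := exists_grayArray t d
  rw [Nat.add_sub_cancel_left]
  refine ⟨s, hbij, hzero, hprefix, hstep, fun k k' hk c _ => ?_⟩
  calc (#{j | s (j, k) c ≠ s (j, k') c} : ℝ)
      ≤ ((2 ^ t / d : ℕ) : ℝ) + 1 := by exact_mod_cast hcol k k' hk c
    _ ≤ ((2 ^ t : ℕ) : ℝ) / d + 1 := by gcongr; exact Nat.cast_div_le
    _ ≤ m / (2 * ((t + d : ℕ) - t : ℝ)) + 1 := by
      rw [Nat.cast_add, add_sub_cancel_left, ← div_div]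
      gcongr
      rw [le_div_iff₀' two_pos]
      exact_mod_cast h2ℓ

/-- Existence of a two-dimensional Gray-code array partitioning `F_2^n`.
Given positive integers `n, m` with `2n ≤ m` and `m·n ≤ 2^n`, `t = ⌊log₂(m/2)⌋` and
`ℓ = 2^t`, there is a bijection `s : {1,…,ℓ} × {1,…,2^{n−t}} → F_2^n` such that:
(1) the last `n−t` coordinates of `s(j,1)` are all `0`, and strings in each row share the
same first `t` coordinates; (2) `s(j,k)` and `s(j,k+1)` differ in exactly one coordinate;
(3) for each `k` and each coordinate `t' ∈ {t+1,…,n}`, at most `m/(2(n−t)) + 1` indices `j`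
have `s(j,k)` and `s(j,k+1)` differing in coordinate `t'`.
(Coordinates are 1-indexed; the `Fin n` index `c` corresponds to coordinate `c + 1`.) -/
theorem exists_gray_code_array (n m t ℓ : ℕ)
    (hn : 1 ≤ n) (hm : 1 ≤ m) (h2n : 2 * n ≤ m) (hmn : m * n ≤ 2 ^ n)
    (ht : t = Nat.log 2 (m / 2)) (hℓ : ℓ = 2 ^ t) :
    ∃ s : Fin ℓ × Fin (2 ^ (n - t)) → (Fin n → ZMod 2),
      Function.Bijective s ∧
      (∀ (j : Fin ℓ) (k₀ : Fin (2 ^ (n - t))), (k₀ : ℕ) = 0 →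
        ∀ c : Fin n, t ≤ (c : ℕ) → s (j, k₀) c = 0) ∧
      (∀ (j : Fin ℓ) (k k' : Fin (2 ^ (n - t))) (c : Fin n),
        (c : ℕ) < t → s (j, k) c = s (j, k') c) ∧
      (∀ (j : Fin ℓ) (k k' : Fin (2 ^ (n - t))), (k' : ℕ) = (k : ℕ) + 1 →
        (Finset.univ.filter fun c : Fin n => s (j, k) c ≠ s (j, k') c).card = 1) ∧
      (∀ (k k' : Fin (2 ^ (n - t))), (k' : ℕ) = (k : ℕ) + 1 →
        ∀ c : Fin n, t ≤ (c : ℕ) →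
          ((Finset.univ.filter fun j : Fin ℓ => s (j, k) c ≠ s (j, k') c).card : ℝ) ≤
            (m : ℝ) / (2 * ((n : ℝ) - (t : ℝ))) + 1) :=
  exists_gray_code_array_general n m t ℓ hn h2n hmn ht hℓ
end

section
/- For every integer n ≥ 1 there exist an integer ℓ ≥ 1 with (ℓ + 1)·(n + 1) ≤ 2^{n+2} (i.e. ℓ ≤ 2^{n+2}/(n+1) − 1) and subsets T^{(1)}, …, T^{(ℓ)} of F_2^n \ {0} such that: (1) each T^{(i)} has exactly n elements; (2) for each i, the n vectors in T^{(i)} are linearly independent over F_2; (3) the union of T^{(1)}, …, T^{(ℓ)} equals F_2^n \ {0}. -/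
/-!
Identify `F_2^n` with the field `F_{2^n}` and let `ζ` generate its multiplicative group. Then
`ζ` generates the field, so its minimal polynomial has degree `n` and `1, ζ, …, ζ^(n-1)` are
independent; multiplying by `ζ^c` is injective and `F_2`-linear, so every block
`ζ^c, …, ζ^(c+n-1)` of `n` consecutive powers is independent as well. The blocks starting at
multiples of `n` exhaust `ζ^0, …, ζ^(2^n-2)`, i.e. all nonzero vectors, and there are
`⌈(2^n-1)/n⌉` of them.
-/

open Finset Module IntermediateField

def IsLinearIndepCover (F : Type*) {V ι : Type*} [Field F] [AddCommGroup V] [Module F V]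
    [Fintype V] [DecidableEq V] [Fintype ι] (d : ℕ) (T : ι → Finset V) : Prop :=
  (∀ i, #(T i) = d) ∧ (∀ i, LinearIndepOn F id (T i : Set V)) ∧ univ.biUnion T = univ \ {0}

theorem IsLinearIndepCover.map {F V W ι : Type*} [Field F] [AddCommGroup V] [Module F V]
    [AddCommGroup W] [Module F W] [Fintype V] [DecidableEq V] [Fintype W] [DecidableEq W]
    [Fintype ι] {d : ℕ} {T : ι → Finset V} (hT : IsLinearIndepCover F d T) (e : V ≃ₗ[F] W) :
    IsLinearIndepCover F d fun i => (T i).map e.toEquiv.toEmbedding := by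
  obtain ⟨hcard, hli, hcover⟩ := hT
  refine ⟨fun i => by rw [card_map, hcard], fun i => ?_, ?_⟩
  · rw [coe_map]
    exact (hli i).image (by simp)
  · ext w
    have hv := congrArg (e.symm w ∈ ·) hcover
    simp only [mem_biUnion, mem_univ, true_and, mem_sdiff, mem_singleton, eq_iff_iff] at hv
    simp only [mem_biUnion, mem_univ, true_and, mem_sdiff, mem_singleton, mem_map_equiv]
    exact hv.trans e.symm.map_eq_zero_iff.not

theorem linearIndependent_pow_add {F S : Type*} [Field F] [CommRing S] [IsDomain S]
    [Algebra F S] {x : S} (hx : x ≠ 0) (c : ℕ) :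
    LinearIndependent F fun i : Fin (minpoly F x).natDegree => x ^ (c + i) := by
  have hmul : Function.Injective (LinearMap.mulLeft F (x ^ c)) :=
    mul_right_injective₀ (pow_ne_zero c hx)
  simpa [Function.comp_def, pow_add] using
    (linearIndependent_pow x).map' _ (LinearMap.ker_eq_bot.mpr hmul)

theorem FiniteField.exists_isPrimitiveRoot_card_sub_one (K : Type*) [Field K] [Fintype K] :
    ∃ ζ : K, IsPrimitiveRoot ζ (Fintype.card K - 1) := by
  classical
  obtain ⟨g, hg⟩ := IsCyclic.exists_ofOrder_eq_natCard (α := Kˣ)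
  refine ⟨g, IsPrimitiveRoot.coe_units_iff.mpr ?_⟩
  rw [← Fintype.card_units, ← Nat.card_eq_fintype_card, ← hg]
  exact IsPrimitiveRoot.orderOf g

theorem IsPrimitiveRoot.exists_pow_eq_of_ne_zero {K : Type*} [Field K] [Fintype K] {ζ x : K}
    (hζ : IsPrimitiveRoot ζ (Fintype.card K - 1)) (hx : x ≠ 0) :
    ∃ i < Fintype.card K - 1, ζ ^ i = x := by
  have : NeZero (Fintype.card K - 1) := ⟨by have := Fintype.one_lt_card (α := K); omega⟩
  exact hζ.eq_pow_of_pow_eq_one (FiniteField.pow_card_sub_one_eq_one x hx)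

theorem IsPrimitiveRoot.adjoin_eq_top {F K : Type*} [Field F] [Field K] [Fintype K] [Algebra F K]
    {ζ : K} (hζ : IsPrimitiveRoot ζ (Fintype.card K - 1)) : F⟮ζ⟯ = ⊤ := by
  refine eq_top_iff.mpr fun x _ => ?_
  obtain rfl | hx := eq_or_ne x 0
  · exact zero_mem _
  · obtain ⟨i, -, rfl⟩ := hζ.exists_pow_eq_of_ne_zero hx
    exact pow_mem (mem_adjoin_simple_self F ζ) i

theorem FiniteField.exists_isLinearIndepCover (F K : Type*) [Field F] [Field K] [Fintype K]
    [DecidableEq K] [Algebra F K] :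
    ∃ T : Fin ((Fintype.card K - 2) / finrank F K + 1) → Finset K,
      IsLinearIndepCover F (finrank F K) T := by
  obtain ⟨ζ, hζ⟩ := exists_isPrimitiveRoot_card_sub_one K
  have hζ0 : ζ ≠ 0 := hζ.ne_zero (by have := Fintype.one_lt_card (α := K); omega)
  have hdeg : (minpoly F ζ).natDegree = finrank F K :=
    (Field.primitive_element_iff_minpoly_natDegree_eq F ζ).mp hζ.adjoin_eq_top
  have hd : 0 < finrank F K := hdeg ▸ minpoly.natDegree_pos (IsIntegral.of_finite F ζ)
  have hli (c : ℕ) : LinearIndependent F fun j : Fin (finrank F K) => ζ ^ (c + j) :=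
    hdeg ▸ linearIndependent_pow_add hζ0 c
  set d := finrank F K
  refine ⟨fun i => univ.image fun j : Fin d => ζ ^ (i * d + j), fun i => ?_, fun i => ?_, ?_⟩
  · rw [card_image_of_injective _ (hli _).injective, card_univ, Fintype.card_fin]
  · rw [coe_image, coe_univ, Set.image_univ]
    exact (linearIndepOn_id_range_iff (hli _).injective).mpr (hli _)
  · ext x
    simp only [mem_biUnion, mem_univ, true_and, mem_image, mem_sdiff, mem_singleton]
    constructor
    · rintro ⟨i, j, rfl⟩
      exact pow_ne_zero _ hζ0
    · intro hx
      obtain ⟨k, hk, rfl⟩ := hζ.exists_pow_eq_of_ne_zero hx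
      have hi : k / d < (Fintype.card K - 2) / d + 1 :=
        Nat.lt_succ_of_le (Nat.div_le_div_right (by omega))
      exact ⟨⟨k / d, hi⟩, ⟨k % d, Nat.mod_lt k hd⟩, by rw [Nat.div_add_mod']⟩

theorem two_pow_sub_two_div_add_two_mul_le (n : ℕ) :
    ((2 ^ n - 2) / n + 1 + 1) * (n + 1) ≤ 2 ^ (n + 2) := by
  have hn : n + 1 ≤ 2 ^ n := Nat.lt_two_pow_self
  have hqn : (2 ^ n - 2) / n * n ≤ 2 ^ n := (Nat.div_mul_le_self _ _).trans (Nat.sub_le _ _)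
  have hq : (2 ^ n - 2) / n ≤ 2 ^ n := (Nat.div_le_self _ _).trans (Nat.sub_le _ _)
  rw [pow_add]
  nlinarith

/-- There are `ℓ ≤ 2^{n+2}/(n+1) − 1` subsets `T⁽¹⁾, …, T⁽ℓ⁾` of `F_2^n \ {0}`, each
consisting of `n` linearly independent vectors over `F_2`, whose union is all of
`F_2^n \ {0}`. -/
theorem exists_linearly_independent_cover (n : ℕ) (hn : 1 ≤ n) :
    ∃ ℓ : ℕ, 1 ≤ ℓ ∧ (ℓ + 1) * (n + 1) ≤ 2 ^ (n + 2) ∧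
      ∃ T : Fin ℓ → Finset (Fin n → ZMod 2),
        (∀ i, (T i).card = n) ∧
        (∀ i, LinearIndependent (ZMod 2)
          (Subtype.val : {x // x ∈ T i} → (Fin n → ZMod 2))) ∧
        Finset.univ.biUnion T = Finset.univ \ {0} := by
  classical
  have hn0 : n ≠ 0 := by omega
  let K := GaloisField 2 n
  let _ : Fintype K := Fintype.ofFinite K
  have hcover := FiniteField.exists_isLinearIndepCover (ZMod 2) K
  rw [Fintype.card_eq_nat_card, GaloisField.card 2 n hn0, GaloisField.finrank 2 hn0] at hcover
  obtain ⟨T, hT⟩ := hcover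
  let e : K ≃ₗ[ZMod 2] (Fin n → ZMod 2) :=
    LinearEquiv.ofFinrankEq _ _ (by rw [GaloisField.finrank 2 hn0, finrank_fin_fun])
  obtain ⟨hcard, hli, hunion⟩ := hT.map e
  exact ⟨_, Nat.le_add_left 1 _, two_pow_sub_two_div_add_two_mul_le n, _, hcard, hli, hunion⟩
end

section
/- For every integer n ≥ 1 there exists a subset L ⊆ F_2^n with |L|·(n + 1) ≤ 2^{n+1} (i.e. |L| ≤ 2^{n+1}/(n+1)) such that every y ∈ F_2^n either belongs to L or can be written as y = x + e_i for some x ∈ L and some i ∈ {1,…,n}; equivalently, F_2^n = L ∪ ⋃_{x ∈ L} {x + e_1, x + e_2, …, x + e_n}. -/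
/-- The standard basis vector of `F_2^n` with a `1` in coordinate `i` and `0` elsewhere. -/
def stdBasis (n : ℕ) (i : Fin n) : Fin n → ZMod 2 := fun j => if j = i then 1 else 0

lemma zmod2_cases : ∀ x : ZMod 2, x = 0 ∨ x = 1 := by decide

lemma exists_bit_repr : ∀ (k : ℕ) (c : Fin k → ZMod 2), c ≠ 0 →
    ∃ m, 0 < m ∧ m < 2 ^ k ∧ ∀ t : Fin k, c t = if Nat.testBit m (t : ℕ) then 1 else 0 := by
  intro k
  induction k with
  | zero =>
    intro c hc
    exact absurd (funext fun t => t.elim0) hc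
  | succ k ih =>
    intro c hc
    by_cases h' : (fun t : Fin k => c t.succ) = 0
    · -- c 0 must be 1
      have h0 : c 0 = 1 := by
        rcases zmod2_cases (c 0) with h | h
        · exfalso; apply hc
          funext t
          refine Fin.cases h (fun t => ?_) t
          exact congrFun h' t
        · exact h
      refine ⟨1, one_pos, Nat.one_lt_two_pow_iff.mpr (by omega), fun t => ?_⟩
      refine Fin.cases ?_ (fun t => ?_) t
      · simpa using h0
      · simp only [Fin.val_succ, Nat.testBit_add_one]
        simpa using congrFun h' t
    · obtain ⟨m, hm0, hmlt, hbits⟩ := ih _ h'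
      rcases zmod2_cases (c 0) with h | h
      · refine ⟨2 * m, by omega, by simp [pow_succ]; omega, fun t => ?_⟩
        refine Fin.cases ?_ (fun t => ?_) t
        · have hmod : (2 * m) % 2 = 0 := by omega
          simp [Nat.testBit_zero, hmod, h]
        · have : Nat.testBit (2 * m) (t : ℕ).succ = Nat.testBit m t := by
            rw [Nat.testBit_add_one]
            congr 1
            omega
          simpa [this] using hbits t
      · refine ⟨2 * m + 1, by omega, by simp [pow_succ]; omega, fun t => ?_⟩
        refine Fin.cases ?_ (fun t => ?_) t
        · have hmod : (2 * m + 1) % 2 = 1 := by omega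
          simp [Nat.testBit_zero, hmod, h]
        · have : Nat.testBit (2 * m + 1) (t : ℕ).succ = Nat.testBit m t := by
            rw [Nat.testBit_add_one]
            congr 1
            omega
          simpa [this] using hbits t

/-- the parity-check column attached to coordinate `j`: binary digits of `j+1`. -/
def bvec (n k : ℕ) (j : Fin n) : Fin k → ZMod 2 := fun t => if Nat.testBit ((j : ℕ) + 1) t then 1 else 0

/-- the syndrome map. -/
def synd (n k : ℕ) : (Fin n → ZMod 2) →ₗ[ZMod 2] (Fin k → ZMod 2) where
  toFun y := fun t => ∑ j : Fin n, y j * bvec n k j t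
  map_add' x y := by
    funext t
    simp [add_mul, Finset.sum_add_distrib]
  map_smul' a y := by
    funext t
    simp [Finset.mul_sum, mul_assoc]

lemma synd_stdBasis (n k : ℕ) (i : Fin n) : synd n k (stdBasis n i) = bvec n k i := by
  funext t
  simp only [synd, LinearMap.coe_mk, AddHom.coe_mk, stdBasis]
  rw [Finset.sum_eq_single i]
  · simp
  · intro b _ hb; simp [hb]
  · simp

/-- There is a set `L ⊆ F_2^n` with `|L| ≤ 2^{n+1}/(n+1)` such that every `y ∈ F_2^n`
either belongs to `L` or can be written as `y = x + e_i` for some `x ∈ L` and some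
`i ∈ {1,…,n}`. -/
theorem exists_small_dominating_set (n : ℕ) (hn : 1 ≤ n) :
    ∃ L : Finset (Fin n → ZMod 2), L.card * (n + 1) ≤ 2 ^ (n + 1) ∧
      ∀ y : Fin n → ZMod 2, y ∈ L ∨ ∃ x ∈ L, ∃ i : Fin n, y = x + stdBasis n i := by
  classical
  set k := Nat.log 2 (n + 1) with hk
  have h1 : 2 ^ k ≤ n + 1 := Nat.pow_log_le_self 2 (by omega)
  have h2 : n + 1 < 2 ^ (k + 1) := Nat.lt_pow_succ_log_self (by norm_num) _
  set L : Finset (Fin n → ZMod 2) := Finset.univ.filter (fun y => synd n k y = 0) with hL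
  -- positions for the standard sub-basis
  have hpos : ∀ t : Fin k, 2 ^ (t : ℕ) - 1 < n := by
    intro t
    have ht : (t : ℕ) + 1 ≤ k := t.2
    have : 2 ^ ((t : ℕ) + 1) ≤ 2 ^ k := Nat.pow_le_pow_right (by norm_num) ht
    have h3 : 2 ^ (t : ℕ) ≥ 1 := Nat.one_le_two_pow
    have : 2 * 2 ^ (t : ℕ) ≤ n + 1 := by
      calc 2 * 2 ^ (t : ℕ) = 2 ^ ((t : ℕ) + 1) := by ring
      _ ≤ 2 ^ k := this
      _ ≤ n + 1 := h1
    omega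
  set pos : Fin k → Fin n := fun t => ⟨2 ^ (t : ℕ) - 1, hpos t⟩ with hposdef
  have hpos1 : ∀ t : Fin k, ((pos t : ℕ) + 1) = 2 ^ (t : ℕ) := by
    intro t
    have : 1 ≤ 2 ^ (t : ℕ) := Nat.one_le_two_pow
    simp [hposdef]
    omega
  set lift : (Fin k → ZMod 2) → (Fin n → ZMod 2) := fun c => ∑ t : Fin k, c t • stdBasis n (pos t) with hlift
  have hsyndlift : ∀ c, synd n k (lift c) = c := by
    intro c
    rw [hlift]
    simp only [map_sum, map_smul, synd_stdBasis]
    funext t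
    simp only [Finset.sum_apply, Pi.smul_apply, bvec, hpos1]
    rw [Finset.sum_eq_single t]
    · simp [Nat.testBit_two_pow_self]
    · intro b _ hb
      rw [Nat.testBit_two_pow_of_ne (by exact_mod_cast fun h => hb (Fin.ext h))]
      simp
    · simp
  refine ⟨L, ?_, ?_⟩
  · -- cardinality bound
    have hinj : Set.InjOn (fun p : (Fin n → ZMod 2) × (Fin k → ZMod 2) => p.1 + lift p.2)
        (↑(L ×ˢ (Finset.univ : Finset (Fin k → ZMod 2))) : Set _) := by
      intro p hp q hq hpq
      simp only [Finset.coe_product, Set.mem_prod, Finset.mem_coe, hL, Finset.mem_filter] at hp hq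
      have h1' : synd n k p.1 = 0 := hp.1.2
      have h2' : synd n k q.1 = 0 := hq.1.2
      have := congrArg (synd n k) hpq
      simp only [map_add, hsyndlift, h1', h2', zero_add] at this
      have hc : p.2 = q.2 := this
      have hx : p.1 = q.1 := by
        have := hpq
        simp only [hc] at this
        exact add_right_cancel this
      exact Prod.ext hx hc
    have hcard := Finset.card_le_card_of_injOn (t := Finset.univ) _ (fun p _ => Finset.mem_univ _) hinj
    rw [Finset.card_product, Finset.card_univ, Finset.card_univ] at hcard
    have hck : Fintype.card (Fin k → ZMod 2) = 2 ^ k := by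
      simp [Fintype.card_fun, ZMod.card]
    have hcn : Fintype.card (Fin n → ZMod 2) = 2 ^ n := by
      simp [Fintype.card_fun, ZMod.card]
    rw [hck, hcn] at hcard
    calc L.card * (n + 1) ≤ L.card * 2 ^ (k + 1) := by
          exact Nat.mul_le_mul_left _ (le_of_lt h2)
      _ = L.card * 2 ^ k * 2 := by ring
      _ ≤ 2 ^ n * 2 := Nat.mul_le_mul_right _ hcard
      _ = 2 ^ (n + 1) := by ring
  · -- domination
    intro y
    by_cases hy : synd n k y = 0
    · left
      simp [hL, hy]
    · right
      obtain ⟨m, hm0, hmlt, hbits⟩ := exists_bit_repr k (synd n k y) hy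
      have hmn : m - 1 < n := by omega
      set i : Fin n := ⟨m - 1, hmn⟩ with hi
      have hi1 : (i : ℕ) + 1 = m := by simp [hi]; omega
      have hsyndi : synd n k (stdBasis n i) = synd n k y := by
        rw [synd_stdBasis]
        funext t
        rw [hbits t]
        simp [bvec, hi1]
      refine ⟨y + stdBasis n i, ?_, i, ?_⟩
      · simp only [hL, Finset.mem_filter, Finset.mem_univ, true_and, map_add, hsyndi]
        funext t
        simp [CharTwo.add_self_eq_zero]
      · funext j
        simp only [Pi.add_apply, add_assoc, CharTwo.add_self_eq_zero, add_zero]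
end
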